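/- arXiv:1610.03218 — 6 statements merged into one kernel-verified Lean document; each statement's English description precedes it below -/
import Mathlib

section
/- For a continuous function ψ : [0,∞) → ℝ with ψ(0) ≥ 0, define φ(t) = ψ(t) - inf_{s∈[0,t]} (ψ(s) ∧ 0) and η(t) = -inf_{s∈[0,t]} (ψ(s) ∧ 0). Then (φ, η) solves the one-dimensional Skorohod problem for ψ: φ = ψ + η, φ(t) ≥ 0 for all t, η is nonnegative and nondecreasing with η(0) = 0, and η increases only when φ = 0, i.e., ∫₀^T 1_{φ(s) > 0} dη(s) = 0 for every T. -/
/-!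
The running infimum `m t = inf_{[0,t]} (ψ ∧ 0)` is nonincreasing, and by continuity it is attained.
If it strictly drops on `[a, b]`, it is attained at some `s ∈ (a, b]` with `ψ s ∧ 0 = m s`; there
`φ s = ψ s - m s > 0` forces `ψ s ∧ 0 = 0`, so `m b = 0 ≥ m a`, which is absurd.
-/

open Set

section RunningInf

variable {α : Type*} [ConditionallyCompleteLinearOrder α]

noncomputable def runningInf (f : ℝ → α) (t : ℝ) : α :=
  sInf (f '' Icc 0 t)

theorem runningInf_zero (f : ℝ → α) : runningInf f 0 = f 0 := by
  rw [runningInf, Icc_self, image_singleton, csInf_singleton]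

variable [TopologicalSpace α] [ClosedIicTopology α] {f : ℝ → α} {a b s t : ℝ}

theorem runningInf_le (hf : Continuous f) (hs : s ∈ Icc 0 t) : runningInf f t ≤ f s :=
  have : Nonempty α := ⟨f 0⟩
  csInf_le (isCompact_Icc.image hf).bddBelow (mem_image_of_mem f hs)

theorem runningInf_le_self (hf : Continuous f) (ht : 0 ≤ t) : runningInf f t ≤ f t :=
  runningInf_le hf ⟨ht, le_rfl⟩

theorem exists_mem_Icc_eq_runningInf (hf : Continuous f) (ht : 0 ≤ t) :
    ∃ s ∈ Icc 0 t, f s = runningInf f t :=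
  (isCompact_Icc.image hf).sInf_mem ((nonempty_Icc.2 ht).image f)

theorem runningInf_antitoneOn (hf : Continuous f) : AntitoneOn (runningInf f) (Ici 0) :=
  fun _ ha _ _ hab =>
    le_csInf ((nonempty_Icc.2 ha).image f)
      (forall_mem_image.2 fun _ hs => runningInf_le hf ⟨hs.1, hs.2.trans hab⟩)

/-- The running infimum can only decrease at times `u` where `f u = runningInf f u`. -/
theorem runningInf_eq_of_forall_eq_runningInf (hf : Continuous f) (ha : 0 ≤ a) (hab : a ≤ b)
    (h : ∀ u ∈ Icc a b, f u = runningInf f u → runningInf f a ≤ f u) :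
    runningInf f b = runningInf f a := by
  refine le_antisymm (runningInf_antitoneOn hf ha (ha.trans hab) hab) ?_
  obtain ⟨s, hs, hfs⟩ := exists_mem_Icc_eq_runningInf hf (ha.trans hab)
  rw [← hfs]
  rcases le_or_gt s a with hsa | has
  · exact runningInf_le hf ⟨hs.1, hsa⟩
  · refine h s ⟨has.le, hs.2⟩ (le_antisymm ?_ (runningInf_le_self hf hs.1))
    rw [hfs]
    exact runningInf_antitoneOn hf hs.1 (ha.trans hab) hs.2

end RunningInf

/-- The explicit pair `(φ, η)` given by the reflection formula solves the
one-dimensional Skorohod problem for a continuous path `ψ` with `ψ 0 ≥ 0`. -/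
theorem skorohod_one_dim_existence
    (ψ : ℝ → ℝ) (hψ : Continuous ψ) (hψ0 : 0 ≤ ψ 0)
    (φ η : ℝ → ℝ)
    (hφ : ∀ t, φ t = ψ t - sInf ((fun s => min (ψ s) 0) '' Icc 0 t))
    (hη : ∀ t, η t = - sInf ((fun s => min (ψ s) 0) '' Icc 0 t)) :
    (∀ t, 0 ≤ t → φ t = ψ t + η t) ∧
    (∀ t, 0 ≤ t → 0 ≤ φ t) ∧
    (∀ t, 0 ≤ t → 0 ≤ η t) ∧
    η 0 = 0 ∧
    MonotoneOn η (Ici 0) ∧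
    (∀ a b : ℝ, 0 ≤ a → a ≤ b → (∀ u ∈ Icc a b, 0 < φ u) → η b = η a) := by
  set f : ℝ → ℝ := fun s => min (ψ s) 0
  have hf : Continuous f := hψ.min continuous_const
  have hφ : ∀ t, φ t = ψ t - runningInf f t := hφ
  have hη : ∀ t, η t = -runningInf f t := hη
  have le_ψ (t : ℝ) (ht : 0 ≤ t) : runningInf f t ≤ ψ t :=
    (runningInf_le_self hf ht).trans (min_le_left _ _)
  have nonpos (t : ℝ) (ht : 0 ≤ t) : runningInf f t ≤ 0 :=
    (runningInf_le_self hf ht).trans (min_le_right _ _)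
  refine ⟨fun t _ => by rw [hφ, hη]; ring, fun t ht => ?_, fun t ht => ?_, ?_, ?_, ?_⟩
  · linarith [hφ t, le_ψ t ht]
  · linarith [hη t, nonpos t ht]
  · rw [hη, runningInf_zero, neg_eq_zero]
    exact min_eq_right hψ0
  · intro a ha b hb hab
    rw [hη, hη]
    exact neg_le_neg (runningInf_antitoneOn hf ha hb hab)
  · intro a b ha hab hpos
    rw [hη, hη, runningInf_eq_of_forall_eq_runningInf hf ha hab]
    intro u hu hfu
    have hfψ : f u < ψ u := by linarith [hφ u, hpos u hu]
    have hψ_pos : 0 < ψ u := by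
      by_contra! hψ_nonpos
      exact hfψ.ne (min_eq_left hψ_nonpos)
    rw [show f u = 0 from min_eq_right hψ_pos.le]
    exact nonpos a ha
end

section
/- The solution of the one-dimensional Skorohod problem is unique: if ψ : [0,∞) → ℝ is continuous with ψ(0) ≥ 0 and (φ₁, η₁), (φ₂, η₂) are two pairs of continuous functions each satisfying φᵢ = ψ + ηᵢ, φᵢ ≥ 0, ηᵢ nondecreasing with ηᵢ(0) = 0, and ∫₀^T 1_{φᵢ(s) > 0} dηᵢ(s) = 0 for all T, then φ₁ = φ₂ and η₁ = η₂. -/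
/-! If `η₁ t > η₂ t`, go back to the last time `s ≤ t` at which `η₁ ≤ η₂`. On `(s, t]`,
`φ₁ = φ₂ + (η₁ - η₂) > 0`, so `η₁` does not increase there, while `η₂` cannot decrease:
hence `η₁ - η₂` is no larger at `t` than at `s`, a contradiction. By symmetry `η₁ = η₂`,
and then `φ₁ = ψ + η₁ = φ₂`. -/

open Set

/-- A pair `(φ, η)` is a solution of the one-dimensional Skorohod problem for `ψ`:
`φ = ψ + η`, `φ ≥ 0`, `η` is nonnegative nondecreasing with `η 0 = 0`, and the
Stieltjes measure `dη` charges only the zero set of `φ` (equivalently, `η` is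
constant on any interval where `φ > 0`). -/
def IsSkorohodSolution (ψ φ η : ℝ → ℝ) : Prop :=
  (∀ t, 0 ≤ t → φ t = ψ t + η t) ∧
  (∀ t, 0 ≤ t → 0 ≤ φ t) ∧
  (∀ t, 0 ≤ t → 0 ≤ η t) ∧
  η 0 = 0 ∧
  MonotoneOn η (Ici 0) ∧
  (∀ a b : ℝ, 0 ≤ a → a ≤ b → (∀ u ∈ Icc a b, 0 < φ u) → η b = η a)

theorem exists_last_nonpos_of_continuousOn {f : ℝ → ℝ} {a b : ℝ} (hab : a ≤ b)
    (hf : ContinuousOn f (Icc a b)) (ha : f a ≤ 0) (hb : 0 < f b) :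
    ∃ s ∈ Ico a b, f s ≤ 0 ∧ ∀ u ∈ Ioc s b, 0 < f u := by
  set S := Icc a b ∩ f ⁻¹' Iic 0
  have hS : IsCompact S := isCompact_Icc.of_isClosed_subset
    (hf.preimage_isClosed_of_isClosed isClosed_Icc isClosed_Iic) inter_subset_left
  obtain ⟨s, ⟨⟨has, hsb⟩, hs⟩, hmax⟩ := hS.exists_isGreatest ⟨a, ⟨le_rfl, hab⟩, ha⟩
  refine ⟨s, ⟨has, hsb.lt_of_ne fun h => hb.not_ge (h ▸ hs)⟩, hs, fun u hu => ?_⟩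
  by_contra! hu'
  exact hu.1.not_ge (hmax ⟨⟨has.trans hu.1.le, hu.2⟩, hu'⟩)

namespace IsSkorohodSolution

variable {ψ φ η : ℝ → ℝ}

theorem eq_of_pos_on_Ioc (h : IsSkorohodSolution ψ φ η) (hη : Continuous η) {s t : ℝ}
    (hs : 0 ≤ s) (hst : s ≤ t) (hpos : ∀ u ∈ Ioc s t, 0 < φ u) : η s = η t := by
  rcases hst.eq_or_lt with rfl | hst
  · rfl
  have hflat : EqOn η (fun _ => η t) (Ioc s t) := fun a ha =>
    (h.2.2.2.2.2 a t (hs.trans ha.1.le) ha.2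
      fun u hu => hpos u ⟨ha.1.trans_le hu.1, hu.2⟩).symm
  have := hflat.closure hη continuous_const
  rw [closure_Ioc hst.ne] at this
  exact this (left_mem_Icc.2 hst.le)

theorem eta_le {φ' η' : ℝ → ℝ} (h : IsSkorohodSolution ψ φ η) (h' : IsSkorohodSolution ψ φ' η')
    (hη : Continuous η) (hη' : Continuous η') {t : ℝ} (ht : 0 ≤ t) : η t ≤ η' t := by
  obtain ⟨hφ', hφ'_nonneg, -, hη'0, hη'_mono, -⟩ := h'
  by_contra! hlt
  obtain ⟨s, ⟨hs0, hst⟩, hs, hgap⟩ := exists_last_nonpos_of_continuousOn (f := η - η') ht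
    (hη.sub hη').continuousOn (by simp [h.2.2.2.1, hη'0]) (sub_pos.2 hlt)
  have hφ_pos : ∀ u ∈ Ioc s t, 0 < φ u := fun u hu => by
    have hu0 : 0 ≤ u := hs0.trans hu.1.le
    have : 0 < η u - η' u := hgap u hu
    linarith [h.1 u hu0, hφ' u hu0, hφ'_nonneg u hu0]
  have hs : η s - η' s ≤ 0 := hs
  linarith [h.eq_of_pos_on_Ioc hη hs0 hst.le hφ_pos, hη'_mono hs0 ht hst.le]

end IsSkorohodSolution

theorem skorohod_one_dim_uniqueness_general
    (ψ : ℝ → ℝ)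
    (φ₁ η₁ φ₂ η₂ : ℝ → ℝ)
    (hη₁ : Continuous η₁)
    (hη₂ : Continuous η₂)
    (h₁ : IsSkorohodSolution ψ φ₁ η₁)
    (h₂ : IsSkorohodSolution ψ φ₂ η₂) :
    ∀ t, 0 ≤ t → φ₁ t = φ₂ t ∧ η₁ t = η₂ t := by
  intro t ht
  have hη : η₁ t = η₂ t := (h₁.eta_le h₂ hη₁ hη₂ ht).antisymm (h₂.eta_le h₁ hη₂ hη₁ ht)
  exact ⟨by rw [h₁.1 t ht, h₂.1 t ht, hη], hη⟩

/-- Uniqueness of solutions of the one-dimensional Skorohod problem. -/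
theorem skorohod_one_dim_uniqueness
    (ψ : ℝ → ℝ) (hψ : Continuous ψ) (hψ0 : 0 ≤ ψ 0)
    (φ₁ η₁ φ₂ η₂ : ℝ → ℝ)
    (hφ₁ : Continuous φ₁) (hη₁ : Continuous η₁)
    (hφ₂ : Continuous φ₂) (hη₂ : Continuous η₂)
    (h₁ : IsSkorohodSolution ψ φ₁ η₁)
    (h₂ : IsSkorohodSolution ψ φ₂ η₂) :
    ∀ t, 0 ≤ t → φ₁ t = φ₂ t ∧ η₁ t = η₂ t :=
  skorohod_one_dim_uniqueness_general ψ φ₁ η₁ φ₂ η₂ hη₁ hη₂ h₁ h₂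
end

section
/- Let g : [0,∞) → ℝ≥0 be integrable with ∫₀^δ g ≤ c < 1, and let f : [0,δ] → ℝ be continuous satisfying |f(t)| ≤ λ ∫₀^t g(t-s)|f(s)| ds for all t ∈ [0,δ], where λ c < 1. Then f ≡ 0 on [0,δ]. -/
open Set MeasureTheory

/-!
Let `M` be the maximum of `|f|` on the compact interval `[0, δ]`, attained at `t₀`. Bounding `|f s|`
by `M` inside the renewal integral at `t₀` gives `M ≤ λ (∫₀^{t₀} g) M ≤ λ c M`, and `λ c < 1`
forces `M = 0`.
-/

theorem intervalIntegral.integral_comp_sub_mul_le {g h : ℝ → ℝ} {t M : ℝ} (ht : 0 ≤ t)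
    (hg : ∀ x ∈ Icc 0 t, 0 ≤ g x) (hgi : IntervalIntegrable g volume 0 t)
    (hh : ContinuousOn h (Icc 0 t)) (hM : ∀ s ∈ Icc 0 t, h s ≤ M) :
    ∫ s in (0:ℝ)..t, g (t - s) * h s ≤ (∫ s in (0:ℝ)..t, g s) * M := by
  have hgt : IntervalIntegrable (fun s => g (t - s)) volume 0 t := by
    simpa using (hgi.comp_sub_left t).symm
  have hflip : ∫ s in (0:ℝ)..t, g (t - s) = ∫ s in (0:ℝ)..t, g s := by
    simp
  rw [← hflip, ← intervalIntegral.integral_mul_const]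
  refine intervalIntegral.integral_mono_on ht
    (hgt.mul_continuousOn (by rwa [uIcc_of_le ht])) (hgt.mul_const M) fun s hs => ?_
  exact mul_le_mul_of_nonneg_left (hM s hs) (hg _ ⟨by linarith [hs.2], by linarith [hs.1]⟩)

theorem gronwall_renewal_inequality_general
    (δ c lam : ℝ) (hlam : 0 ≤ lam) (hlc : lam * c < 1)
    (g : ℝ → ℝ) (hg : ∀ x, 0 ≤ g x)
    (hgint : IntegrableOn g (Icc 0 δ))
    (hgc : ∫ x in (0:ℝ)..δ, g x ≤ c)
    (f : ℝ → ℝ) (hf : ContinuousOn f (Icc 0 δ))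
    (hineq : ∀ t ∈ Icc (0:ℝ) δ, |f t| ≤ lam * ∫ s in (0:ℝ)..t, g (t - s) * |f s|) :
    ∀ t ∈ Icc (0:ℝ) δ, f t = 0 := by
  intro t ht
  obtain ⟨t₀, ⟨ht₀0, ht₀δ⟩, hmax⟩ := isCompact_Icc.exists_isMaxOn ⟨t, ht⟩ hf.abs
  have hgI : IntervalIntegrable g volume 0 δ :=
    (intervalIntegrable_iff_integrableOn_Icc_of_le (ht.1.trans ht.2)).2 hgint
  have hsub : Icc 0 t₀ ⊆ Icc 0 δ := Icc_subset_Icc le_rfl ht₀δ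
  have hmass : ∫ s in (0:ℝ)..t₀, g s ≤ c :=
    (intervalIntegral.integral_mono_interval le_rfl ht₀0 ht₀δ
      (Filter.Eventually.of_forall hg) hgI).trans hgc
  have hconv := intervalIntegral.integral_comp_sub_mul_le ht₀0 (fun x _ => hg x)
    (hgI.mono_set (by simpa [uIcc_of_le ht₀0, uIcc_of_le (ht.1.trans ht.2)] using hsub))
    (hf.abs.mono hsub) (fun s hs => hmax (hsub hs))
  have hM : |f t₀| ≤ lam * c * |f t₀| :=
    calc |f t₀| ≤ lam * ∫ s in (0:ℝ)..t₀, g (t₀ - s) * |f s| := hineq t₀ ⟨ht₀0, ht₀δ⟩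
      _ ≤ lam * ((∫ s in (0:ℝ)..t₀, g s) * |f t₀|) := by gcongr
      _ ≤ lam * c * |f t₀| := by
        rw [mul_assoc]; gcongr
  have hM0 : |f t₀| = 0 := by nlinarith [abs_nonneg (f t₀)]
  exact abs_eq_zero.mp (le_antisymm (hM0 ▸ hmax ht) (abs_nonneg _))

/-- Gronwall-type uniqueness for a renewal-type inequality: if `∫₀^δ g ≤ c` with
`λ c < 1` and `|f t| ≤ λ ∫₀ᵗ g(t-s)|f s| ds` on `[0, δ]`, then `f ≡ 0` on `[0, δ]`. -/
theorem gronwall_renewal_inequality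
    (δ c lam : ℝ) (hδ : 0 < δ) (hlam : 0 ≤ lam) (hlc : lam * c < 1)
    (g : ℝ → ℝ) (hg : ∀ x, 0 ≤ g x)
    (hgint : IntegrableOn g (Icc 0 δ))
    (hgc : ∫ x in (0:ℝ)..δ, g x ≤ c)
    (f : ℝ → ℝ) (hf : ContinuousOn f (Icc 0 δ))
    (hineq : ∀ t ∈ Icc (0:ℝ) δ, |f t| ≤ lam * ∫ s in (0:ℝ)..t, g (t - s) * |f s|) :
    ∀ t ∈ Icc (0:ℝ) δ, f t = 0 :=
  gronwall_renewal_inequality_general δ c lam hlam hlc g hg hgint hgc f hf hineq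
end

section
/- Let Q₀ : [0,∞) → [0,∞) be nondecreasing continuous with Q₀(0)=0 (a distribution function of an atomless measure Q₀ on ℝ₊), and let K + R be continuous nondecreasing with (K+R)(0) = 0. For x ≥ 0 and t ≥ 0, set 𝒬_t[0,x] = Q₀(x) - (K+R)(t) + sup_{s≤t} ((K+R)(s) - Q₀(x))⁺, and define σ̃_t = sup{x : (K+R)(t) ≥ Q₀(x)}. Then for every t: 𝒬_t[0,x] = 0 whenever x < σ̃_t, and 𝒬_t[0,x] > 0 whenever Q₀(x) > (K+R)(t) and x is such that (K+R)(s) < Q₀(x) for all s ≤ t. -/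
open Set

/-! Below `σ̃_t` every level `y ≤ x` has already been served (`Q₀ x ≤ A t`), and since `A` is
nondecreasing the running supremum `sup_{s ≤ t} (A s - Q₀ x)⁺` is attained at `s = t`, so the
two terms of `𝒬_t[0,x]` cancel. If instead `A` stays below `Q₀ x` up to time `t`, that supremum
vanishes and `𝒬_t[0,x] = Q₀ x - A t > 0`. -/

theorem sSup_image_max_sub_zero_of_monotoneOn {f : ℝ → ℝ} {a b c : ℝ} (hab : a ≤ b)
    (hf : MonotoneOn f (Icc a b)) (hc : c ≤ f b) :
    sSup ((fun s => max (f s - c) 0) '' Icc a b) = f b - c := by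
  have hmono : MonotoneOn (fun s => max (f s - c) 0) (Icc a b) :=
    fun x hx y hy hxy => max_le_max_right 0 (sub_le_sub_right (hf hx hy hxy) c)
  rw [(hmono.map_isGreatest (isGreatest_Icc hab)).csSup_eq, max_eq_left (sub_nonneg.2 hc)]

theorem sSup_image_max_sub_zero_of_le {f : ℝ → ℝ} {s : Set ℝ} {c : ℝ} (hs : s.Nonempty)
    (hf : ∀ x ∈ s, f x ≤ c) : sSup ((fun x => max (f x - c) 0) '' s) = 0 := by
  have hzero : EqOn (fun x => max (f x - c) 0) (fun _ => 0) s :=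
    fun x hx => max_eq_right (sub_nonpos.2 (hf x hx))
  rw [hzero.image_eq, hs.image_const, csSup_singleton]

theorem le_of_lt_sSup_sublevel {Q : ℝ → ℝ} (hQ : MonotoneOn Q (Ici 0)) {a x : ℝ} (hx : 0 ≤ x)
    (h : x < sSup {y : ℝ | 0 ≤ y ∧ Q y ≤ a}) : Q x ≤ a := by
  rcases eq_empty_or_nonempty {y : ℝ | 0 ≤ y ∧ Q y ≤ a} with hempty | hne
  · rw [hempty, Real.sSup_empty] at h
    exact absurd hx (not_le.2 h)
  · obtain ⟨y, ⟨-, hQy⟩, hxy⟩ := exists_lt_of_lt_csSup hne h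
    exact (hQ hx (hx.trans hxy.le) hxy.le).trans hQy

theorem queue_support_left_edge_general
    (Q₀ A : ℝ → ℝ)
    (hQ₀m : MonotoneOn Q₀ (Ici 0))
    (hAm : MonotoneOn A (Ici 0))
    (𝒬 : ℝ → ℝ → ℝ)
    (h𝒬 : ∀ t x : ℝ, 0 ≤ t → 0 ≤ x →
      𝒬 t x = Q₀ x - A t + sSup ((fun s => max (A s - Q₀ x) 0) '' Icc 0 t)) :
    ∀ t : ℝ, 0 ≤ t → ∀ x : ℝ, 0 ≤ x →
      ((x < sSup {y : ℝ | 0 ≤ y ∧ Q₀ y ≤ A t} → 𝒬 t x = 0) ∧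
       ((A t < Q₀ x ∧ ∀ s ∈ Icc (0:ℝ) t, A s < Q₀ x) → 0 < 𝒬 t x)) := by
  intro t ht x hx
  rw [h𝒬 t x ht hx]
  constructor
  · intro hlt
    have hserved : Q₀ x ≤ A t := le_of_lt_sSup_sublevel hQ₀m hx hlt
    rw [sSup_image_max_sub_zero_of_monotoneOn ht (hAm.mono Icc_subset_Ici_self) hserved]
    ring
  · rintro ⟨hAt, hbelow⟩
    rw [sSup_image_max_sub_zero_of_le (nonempty_Icc.2 ht) fun s hs => (hbelow s hs).le, add_zero]
    exact sub_pos.2 hAt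

/-- The left edge of the support of the queue measure is the generalized inverse
of `Q₀` at the cumulative departures `A = K + R`: with
`𝒬_t[0,x] = Q₀(x) - A(t) + sup_{s≤t}(A(s) - Q₀(x))⁺` and
`σ̃_t = sup{x : A(t) ≥ Q₀(x)}`, one has `𝒬_t[0,x] = 0` for `x < σ̃_t`, and
`𝒬_t[0,x] > 0` when `Q₀(x) > A(t)` and `A(s) < Q₀(x)` for all `s ≤ t`. -/
theorem queue_support_left_edge
    (Q₀ A : ℝ → ℝ)
    (hQ₀m : MonotoneOn Q₀ (Ici 0)) (hQ₀c : Continuous Q₀) (hQ₀0 : Q₀ 0 = 0)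
    (hAm : MonotoneOn A (Ici 0)) (hAc : Continuous A) (hA0 : A 0 = 0)
    (𝒬 : ℝ → ℝ → ℝ)
    (h𝒬 : ∀ t x : ℝ, 0 ≤ t → 0 ≤ x →
      𝒬 t x = Q₀ x - A t + sSup ((fun s => max (A s - Q₀ x) 0) '' Icc 0 t)) :
    ∀ t : ℝ, 0 ≤ t → ∀ x : ℝ, 0 ≤ x →
      ((x < sSup {y : ℝ | 0 ≤ y ∧ Q₀ y ≤ A t} → 𝒬 t x = 0) ∧
       ((A t < Q₀ x ∧ ∀ s ∈ Icc (0:ℝ) t, A s < Q₀ x) → 0 < 𝒬 t x)) :=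
  queue_support_left_edge_general Q₀ A hQ₀m hAm 𝒬 h𝒬
end

section
/- Let b : [0,T] → ℝ be continuous and ψ : [0,T] → ℝ continuous with ψ(0) ≤ b(0). Then there exists a unique pair (φ, η) of continuous functions such that φ = ψ - η, φ(t) ≤ b(t) for all t, η is nonnegative nondecreasing with η(0) = 0, and ∫₀^T 1_{φ(s) < b(s)} dη(s) = 0; moreover η(t) = sup_{s∈[0,t]} (ψ(s) - b(s))⁺. -/
/-!
The reflection term is the running supremum `η t = sup_{s ≤ t} (ψ s - b s)⁺`. It is the least
nondecreasing nonnegative function keeping `ψ - η` below `b`, and it can only increase at times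
when `ψ - b` attains it, i.e. when `φ = b`. For uniqueness, another solution `η'` dominates `η`
by minimality; where `η' > η` its path `ψ - η'` is strictly below `b`, so `η'` is flat there, and
following `η'` back to the last time it was `≤ η` shows that it never exceeds `η`.
-/

open Set

theorem ContinuousOn.exists_continuous_eqOn_Icc {α β : Type*} [LinearOrder α]
    [TopologicalSpace α] [OrderTopology α] [TopologicalSpace β] {a b : α} (hab : a ≤ b)
    {f : α → β} (hf : ContinuousOn f (Icc a b)) :
    ∃ F : α → β, Continuous F ∧ EqOn F f (Icc a b) :=
  ⟨IccExtend hab ((Icc a b).domRestrict f), hf.domRestrict.Icc_extend',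
    fun _ hx => IccExtend_of_mem hab _ hx⟩

noncomputable def runningSup (f : ℝ → ℝ) (t : ℝ) : ℝ :=
  sSup (f '' Icc 0 t)

section RunningSup

variable {f : ℝ → ℝ} {s t : ℝ}

theorem le_runningSup (hf : Continuous f) (hs : s ∈ Icc 0 t) : f s ≤ runningSup f t :=
  le_csSup (isCompact_Icc.bddAbove_image hf.continuousOn) (mem_image_of_mem f hs)

theorem runningSup_le {c : ℝ} (ht : 0 ≤ t) (h : ∀ s ∈ Icc 0 t, f s ≤ c) :
    runningSup f t ≤ c :=
  csSup_le ((nonempty_Icc.2 ht).image f) (forall_mem_image.2 h)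

theorem runningSup_zero : runningSup f 0 = f 0 := by
  simp [runningSup]

theorem runningSup_le_of_monotoneOn {g : ℝ → ℝ} (ht : 0 ≤ t)
    (hg : MonotoneOn g (Icc 0 t)) (hfg : ∀ s ∈ Icc 0 t, f s ≤ g s) :
    runningSup f t ≤ g t :=
  runningSup_le ht fun s hs => (hfg s hs).trans (hg hs ⟨ht, le_rfl⟩ hs.2)

theorem monotoneOn_runningSup (hf : Continuous f) : MonotoneOn (runningSup f) (Ici 0) :=
  fun _ hs _ _ hst => runningSup_le hs fun _ hu => le_runningSup hf ⟨hu.1, hu.2.trans hst⟩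

theorem continuousOn_runningSup (hf : Continuous f) : ContinuousOn (runningSup f) (Ici 0) := by
  -- reparametrize `[0, t]` as `[0, 1] * t` to get a supremum over a fixed compact set
  have h : Continuous fun t => sSup ((fun r => f (r * t)) '' Icc 0 1) :=
    isCompact_Icc.continuous_sSup (by fun_prop)
  refine h.continuousOn.congr fun t ht => ?_
  have hIcc : (· * t) '' Icc 0 1 = Icc 0 t := by
    simpa using image_mul_right_Icc zero_le_one (mem_Ici.1 ht)
  rw [runningSup, ← hIcc, image_image]

theorem runningSup_eq_of_forall_lt (hf : Continuous f) {a c : ℝ} (ha : 0 ≤ a) (hac : a ≤ c)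
    (h : ∀ u ∈ Icc a c, runningSup f a < f u → f u < runningSup f u) :
    runningSup f c = runningSup f a := by
  -- if the maximum `f u` of `f` on `[a, c]` beat `runningSup f a`, it would equal `runningSup f u`
  obtain ⟨u, hu, hmax⟩ := isCompact_Icc.exists_isMaxOn (nonempty_Icc.2 hac) hf.continuousOn
  have hbound : ∀ v ∈ Icc a c, runningSup f v ≤ max (runningSup f a) (f u) := by
    refine fun v hv => runningSup_le (ha.trans hv.1) fun s hs => ?_
    rcases le_total s a with hsa | has
    · exact le_max_of_le_left (le_runningSup hf ⟨hs.1, hsa⟩)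
    · exact le_max_of_le_right (hmax ⟨has, hs.2.trans hv.2⟩)
  refine le_antisymm ?_ (monotoneOn_runningSup hf ha (ha.trans hac) hac)
  by_cases hua : f u ≤ runningSup f a
  · simpa [hua] using hbound c ⟨hac, le_rfl⟩
  · have hu_le := hbound u hu
    rw [max_eq_right (not_le.1 hua).le] at hu_le
    exact absurd (h u hu (not_le.1 hua)) hu_le.not_gt

end RunningSup

theorem runningSup_posPart_eq_of_forall_lt {g : ℝ → ℝ} (hg : Continuous g) {a c : ℝ}
    (ha : 0 ≤ a) (hac : a ≤ c)
    (h : ∀ u ∈ Icc a c, g u < runningSup (fun s => max (g s) 0) u) :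
    runningSup (fun s => max (g s) 0) c = runningSup (fun s => max (g s) 0) a := by
  have hg' : Continuous fun s => max (g s) 0 := hg.max continuous_const
  refine runningSup_eq_of_forall_lt hg' ha hac fun u hu hau => ?_
  have hnonneg : 0 ≤ runningSup (fun s => max (g s) 0) a :=
    (le_max_right _ _).trans (le_runningSup hg' ⟨ha, le_rfl⟩)
  have hgu : 0 ≤ g u := by
    by_contra! hneg
    rw [max_eq_right hneg.le] at hau
    linarith
  rw [max_eq_left hgu]
  exact h u hu

theorem runningSup_posPart_le_of_monotoneOn {g h : ℝ → ℝ} {t : ℝ} (ht : 0 ≤ t)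
    (hh : MonotoneOn h (Icc 0 t)) (hh_nonneg : ∀ s ∈ Icc 0 t, 0 ≤ h s)
    (hgh : ∀ s ∈ Icc 0 t, g s ≤ h s) : runningSup (fun s => max (g s) 0) t ≤ h t :=
  runningSup_le_of_monotoneOn ht hh fun s hs => max_le (hgh s hs) (hh_nonneg s hs)

theorem le_of_flat_where_gt {T : ℝ} {η η' : ℝ → ℝ} (hη' : ContinuousOn η' (Icc 0 T))
    (hη : ContinuousOn η (Icc 0 T)) (hmono : MonotoneOn η (Icc 0 T)) (h0 : η' 0 ≤ η 0)
    (hflat : ∀ a c : ℝ, 0 ≤ a → a ≤ c → c ≤ T → (∀ u ∈ Icc a c, η u < η' u) → η' c = η' a)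
    {t : ℝ} (ht : t ∈ Icc 0 T) : η' t ≤ η t := by
  by_contra! hlt
  have hsub : Icc 0 t ⊆ Icc 0 T := Icc_subset_Icc_right ht.2
  -- `a` is the last time in `[0, t]` at which `η' ≤ η`
  set S := {s ∈ Icc 0 t | η' s ≤ η s}
  have hS : IsCompact S := isCompact_Icc.of_isClosed_subset
    (isClosed_Icc.isClosed_le (hη'.mono hsub) (hη.mono hsub)) (sep_subset _ _)
  set a := sSup S
  have haS : a ∈ S := hS.sSup_mem ⟨0, ⟨le_rfl, ht.1⟩, h0⟩
  have hat : a < t := haS.1.2.lt_of_ne fun hat => (hat ▸ haS.2).not_gt hlt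
  have hgt : ∀ u ∈ Ioc a t, η u < η' u := fun u hu => not_le.1 fun hle =>
    hu.1.not_ge (le_csSup hS.bddAbove ⟨⟨haS.1.1.trans hu.1.le, hu.2⟩, hle⟩)
  have hconst : EqOn η' (fun _ => η' t) (Ioc a t) := fun u hu =>
    (hflat u t (haS.1.1.trans hu.1.le) hu.2 ht.2 fun v hv =>
      hgt v ⟨hu.1.trans_le hv.1, hv.2⟩).symm
  have hηa : η' a = η' t :=
    hconst.of_subset_closure (hη'.mono ((Icc_subset_Icc_left haS.1.1).trans hsub))
      continuousOn_const Ioc_subset_Icc_self (closure_Ioc hat.ne).ge ⟨le_rfl, hat.le⟩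
  linarith [haS.2, hmono ⟨haS.1.1, hat.le.trans ht.2⟩ ht hat.le]

/-- Skorohod problem on the time-varying domain `(-∞, b(t)]`: for continuous
`b, ψ` with `ψ 0 ≤ b 0` there is a unique pair `(φ, η)` of continuous functions
with `φ = ψ - η`, `φ ≤ b`, `η` nonnegative nondecreasing with `η 0 = 0`, and
`dη` carried by `{φ = b}`; moreover `η t = sup_{s≤t} (ψ s - b s)⁺`. -/
theorem skorohod_time_varying_barrier
    (T : ℝ) (hT : 0 ≤ T)
    (b ψ : ℝ → ℝ) (hb : ContinuousOn b (Icc 0 T)) (hψ : ContinuousOn ψ (Icc 0 T))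
    (h0 : ψ 0 ≤ b 0) :
    ∃ φ η : ℝ → ℝ,
      ContinuousOn φ (Icc 0 T) ∧ ContinuousOn η (Icc 0 T) ∧
      (∀ t ∈ Icc (0:ℝ) T, φ t = ψ t - η t) ∧
      (∀ t ∈ Icc (0:ℝ) T, φ t ≤ b t) ∧
      (∀ t ∈ Icc (0:ℝ) T, 0 ≤ η t) ∧ η 0 = 0 ∧ MonotoneOn η (Icc 0 T) ∧
      (∀ a c : ℝ, 0 ≤ a → a ≤ c → c ≤ T →
          (∀ u ∈ Icc a c, φ u < b u) → η c = η a) ∧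
      (∀ t ∈ Icc (0:ℝ) T, η t = sSup ((fun s => max (ψ s - b s) 0) '' Icc 0 t)) ∧
      (∀ φ' η' : ℝ → ℝ,
        ContinuousOn φ' (Icc 0 T) → ContinuousOn η' (Icc 0 T) →
        (∀ t ∈ Icc (0:ℝ) T, φ' t = ψ t - η' t) →
        (∀ t ∈ Icc (0:ℝ) T, φ' t ≤ b t) →
        (∀ t ∈ Icc (0:ℝ) T, 0 ≤ η' t) → η' 0 = 0 → MonotoneOn η' (Icc 0 T) →
        (∀ a c : ℝ, 0 ≤ a → a ≤ c → c ≤ T →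
            (∀ u ∈ Icc a c, φ' u < b u) → η' c = η' a) →
        ∀ t ∈ Icc (0:ℝ) T, φ' t = φ t ∧ η' t = η t) := by
  obtain ⟨g, hg, hgψb⟩ := (hψ.sub hb).exists_continuous_eqOn_Icc hT
  replace hgψb : ∀ t ∈ Icc (0:ℝ) T, g t = ψ t - b t := hgψb
  have hg_posPart : Continuous fun s => max (g s) 0 := hg.max continuous_const
  set η := runningSup fun s => max (g s) 0
  have hηc : ContinuousOn η (Icc 0 T) :=
    (continuousOn_runningSup hg_posPart).mono Icc_subset_Ici_self
  have hηmono : MonotoneOn η (Icc 0 T) :=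
    (monotoneOn_runningSup hg_posPart).mono Icc_subset_Ici_self
  have hη_ge : ∀ t ∈ Icc (0:ℝ) T, ψ t - b t ≤ η t := fun t ht =>
    hgψb t ht ▸ (le_max_left _ _).trans (le_runningSup hg_posPart ⟨ht.1, le_rfl⟩)
  have hη_nonneg : ∀ t ∈ Icc (0:ℝ) T, 0 ≤ η t := fun t ht =>
    (le_max_right _ _).trans (le_runningSup hg_posPart ⟨ht.1, le_rfl⟩)
  have hη0 : η 0 = 0 := by
    rw [show η 0 = max (g 0) 0 from runningSup_zero, hgψb 0 ⟨le_rfl, hT⟩]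
    exact max_eq_right (by linarith)
  refine ⟨fun t => ψ t - η t, η, hψ.sub hηc, hηc, fun _ _ => rfl,
    fun t ht => by linarith [hη_ge t ht], hη_nonneg, hη0, hηmono,
    fun a c ha hac hcT hlt => runningSup_posPart_eq_of_forall_lt hg ha hac fun u hu => by
      linarith [hgψb u ⟨ha.trans hu.1, hu.2.trans hcT⟩, hlt u hu],
    fun t ht => congrArg sSup (image_congr fun s hs => by
      rw [hgψb s ⟨hs.1, hs.2.trans ht.2⟩]), ?_⟩
  intro φ' η' _ hη' hφ'eq hφ'le hη'_nonneg hη'0 hη'mono hflat' t ht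
  have hsub : Icc 0 t ⊆ Icc 0 T := Icc_subset_Icc_right ht.2
  have hle : η t ≤ η' t := runningSup_posPart_le_of_monotoneOn ht.1 (hη'mono.mono hsub)
    (fun s hs => hη'_nonneg s (hsub hs))
    (fun s hs => by linarith [hgψb s (hsub hs), hφ'le s (hsub hs), hφ'eq s (hsub hs)])
  have hge : η' t ≤ η t := le_of_flat_where_gt hη' hηc hηmono (by rw [hη'0, hη0])
    (fun a c ha hac hcT hlt => hflat' a c ha hac hcT fun u hu => by
      have huT : u ∈ Icc (0:ℝ) T := ⟨ha.trans hu.1, hu.2.trans hcT⟩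
      linarith [hφ'eq u huT, hη_ge u huT, hlt u hu]) ht
  have hηη' := le_antisymm hge hle
  exact ⟨by rw [hφ'eq t ht, hηη'], hηη'⟩
end

section
/- Let α_t[0,x] = Q₀[0,x] + ∫₀^t 1_{x≥s} λ(s) π[0, x-s] ds with π a probability measure satisfying π[0, 2] = 0, let K, R be continuous nondecreasing with K(0)=R(0)=0, and suppose 𝒬_t[0,x] = Γ₁[α_·[0,x] - K - R](t) for all x, t, and 𝒬_t[0,t) = 0 for all t. Then for all t ∈ [0,1], the total mass Q_t := 𝒬_t[0,∞) satisfies Q_t ≤ b_t, where b_t = Q₀(t,∞) + E_t and E_t = ∫₀^t λ(s) ds. -/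
open Set MeasureTheory Filter Topology

/-!
At a level `x' < t ≤ 1` the patience gap `π[0,2] = 0` makes `α_s[0,x']` constant in `s ∈ [0,t]`,
and `𝒬_t[0,x'] = 0`. Since `φ ≤ ψ` on `[0,t]` implies `Γ₁ψ(t) ≤ Γ₁φ(t) + ψ(t) - φ(t)`,
we get `𝒬_t[0,x] ≤ 𝒬_t[0,x'] + α_t[0,x] - α_t[0,x'] ≤ Q₀(x',∞) + E_t` for every `x ≥ x'`.
Letting `x → ∞` and then `x' ↑ t` (`Q₀` has no atoms) gives `Q_t ≤ Q₀(t,∞) + E_t`.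
At `t = 0` the level `x' = 0` plays the same role, since `Q₀{0} = 0` and `K(0) = R(0) = 0`.
-/

noncomputable section

/-- The one-dimensional Skorohod map `Γ₁`. -/
def skorohodReflection (ψ : ℝ → ℝ) (t : ℝ) : ℝ :=
  ψ t - sInf ((fun s => min (ψ s) 0) '' Icc 0 t)

theorem skorohodReflection_zero (ψ : ℝ → ℝ) : skorohodReflection ψ 0 = max (ψ 0) 0 := by
  simp only [skorohodReflection, Icc_self, image_singleton, csInf_singleton]
  rcases le_total (ψ 0) 0 with h | h <;> simp [h]

theorem skorohodReflection_le_add_sub {φ ψ : ℝ → ℝ} {t : ℝ} (ht : 0 ≤ t)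
    (hφψ : ∀ s ∈ Icc 0 t, φ s ≤ ψ s) (hφ : BddBelow (φ '' Icc 0 t)) :
    skorohodReflection ψ t ≤ skorohodReflection φ t + (ψ t - φ t) := by
  obtain ⟨b, hb⟩ := hφ
  have hbdd : BddBelow ((fun s => min (φ s) 0) '' Icc 0 t) := by
    refine ⟨min b 0, ?_⟩
    rintro _ ⟨s, hs, rfl⟩
    exact min_le_min_right 0 (hb (mem_image_of_mem φ hs))
  have hinf : sInf ((fun s => min (φ s) 0) '' Icc 0 t) ≤
      sInf ((fun s => min (ψ s) 0) '' Icc 0 t) := by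
    refine le_csInf ((nonempty_Icc.2 ht).image _) ?_
    rintro _ ⟨s, hs, rfl⟩
    exact (csInf_le hbdd (mem_image_of_mem _ hs)).trans (min_le_min_right 0 (hφψ s hs))
  unfold skorohodReflection
  linarith

/-- Density at time `s` of arrivals whose deadline `s + patience` lies in `[0, x]`. -/
def arrivalRate (π : Measure ℝ) (lam : ℝ → ℝ) (x s : ℝ) : ℝ :=
  if s ≤ x then lam s * π.real (Icc 0 (x - s)) else 0

/-- The paper's `α_t[0,x]`. -/
def arrival (Q0m π : Measure ℝ) (lam : ℝ → ℝ) (t x : ℝ) : ℝ :=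
  Q0m.real (Icc 0 x) + ∫ s in (0:ℝ)..t, arrivalRate π lam x s

section Arrival

variable {Q0m π : Measure ℝ} {lam : ℝ → ℝ} {t x : ℝ}

theorem arrivalRate_nonneg (hlam : ∀ s, 0 ≤ lam s) (s : ℝ) : 0 ≤ arrivalRate π lam x s := by
  unfold arrivalRate
  split_ifs
  exacts [mul_nonneg (hlam s) measureReal_nonneg, le_rfl]

theorem arrivalRate_le [IsProbabilityMeasure π] (hlam : ∀ s, 0 ≤ lam s) (s : ℝ) :
    arrivalRate π lam x s ≤ lam s := by
  unfold arrivalRate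
  split_ifs
  exacts [mul_le_of_le_one_right (hlam s) measureReal_le_one, hlam s]

theorem le_arrival (hlam : ∀ s, 0 ≤ lam s) (ht : 0 ≤ t) :
    Q0m.real (Icc 0 x) ≤ arrival Q0m π lam t x :=
  le_add_of_nonneg_right (intervalIntegral.integral_nonneg ht fun s _ => arrivalRate_nonneg hlam s)

theorem arrival_le [IsProbabilityMeasure π] (hlam : ∀ s, 0 ≤ lam s) (ht : 0 ≤ t)
    (hint : IntervalIntegrable lam volume 0 t) :
    arrival Q0m π lam t x ≤ Q0m.real (Icc 0 x) + ∫ s in (0:ℝ)..t, lam s := by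
  refine add_le_add le_rfl ?_
  rw [intervalIntegral.integral_of_le ht, intervalIntegral.integral_of_le ht]
  exact integral_mono_of_nonneg (ae_of_all _ (arrivalRate_nonneg hlam))
    ((intervalIntegrable_iff_integrableOn_Ioc_of_le ht).1 hint) (ae_of_all _ (arrivalRate_le hlam))

theorem arrival_eq_of_le {c : ℝ} (hπ : π (Icc 0 c) = 0) (ht : 0 ≤ t) (hx : x ≤ c) :
    arrival Q0m π lam t x = Q0m.real (Icc 0 x) := by
  refine add_eq_left.2 ((intervalIntegral.integral_congr fun s hs => ?_).trans
    (intervalIntegral.integral_zero (a := 0) (b := t)))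
  rw [uIcc_of_le ht] at hs
  have hnull : π (Icc 0 (x - s)) = 0 :=
    measure_mono_null (Icc_subset_Icc_right (by linarith [hs.1])) hπ
  simp [arrivalRate, measureReal_def, hnull]

end Arrival

theorem skorohodReflection_arrival_le_of_eq_zero {Q0m π : Measure ℝ} [IsFiniteMeasure Q0m]
    [IsProbabilityMeasure π] {lam D : ℝ → ℝ} {c t x x' : ℝ} (hlam : ∀ s, 0 ≤ lam s)
    (hint : IntervalIntegrable lam volume 0 t) (hπ : π (Icc 0 c) = 0)
    (hD : MonotoneOn D (Icc 0 t)) (ht : 0 ≤ t) (hx'c : x' ≤ c) (hx' : x' ≤ x)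
    (h0 : skorohodReflection (fun s => arrival Q0m π lam s x' - D s) t = 0) :
    skorohodReflection (fun s => arrival Q0m π lam s x - D s) t ≤
      Q0m.real (Ioi x') + ∫ s in (0:ℝ)..t, lam s := by
  have hconst : ∀ s ∈ Icc 0 t, arrival Q0m π lam s x' = Q0m.real (Icc 0 x') :=
    fun s hs => arrival_eq_of_le hπ hs.1 hx'c
  have hle : ∀ s ∈ Icc 0 t, arrival Q0m π lam s x' - D s ≤ arrival Q0m π lam s x - D s := by
    intro s hs
    rw [hconst s hs]
    have h1 : Q0m.real (Icc 0 x) ≤ arrival Q0m π lam s x := le_arrival hlam hs.1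
    have h2 : Q0m.real (Icc 0 x') ≤ Q0m.real (Icc 0 x) := measureReal_mono (Icc_subset_Icc_right hx')
    linarith
  have hbdd : BddBelow ((fun s => arrival Q0m π lam s x' - D s) '' Icc 0 t) := by
    refine ⟨Q0m.real (Icc 0 x') - D t, ?_⟩
    rintro _ ⟨s, hs, rfl⟩
    simp only [hconst s hs]
    linarith [hD hs (right_mem_Icc.2 ht) hs.2]
  have htail : Q0m.real (Icc 0 x) ≤ Q0m.real (Icc 0 x') + Q0m.real (Ioi x') :=
    (measureReal_mono fun y hy => (le_or_gt y x').imp (fun h => ⟨hy.1, h⟩) id).trans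
      (measureReal_union_le _ _)
  calc _ ≤ 0 + (arrival Q0m π lam t x - D t - (arrival Q0m π lam t x' - D t)) :=
        h0 ▸ skorohodReflection_le_add_sub ht hle hbdd
    _ ≤ _ := by
        rw [hconst t (right_mem_Icc.2 ht)]
        linarith [arrival_le (Q0m := Q0m) (π := π) (x := x) hlam ht hint]

theorem tendsto_measureReal_Ioi_nhdsLT (μ : Measure ℝ) [IsFiniteMeasure μ] [NullSingletonClass μ]
    (t : ℝ) : Tendsto (fun x => μ.real (Ioi x)) (𝓝[<] t) (𝓝 (μ.real (Ioi t))) := by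
  have hgap : Tendsto (fun x => t - x) (𝓝[<] t) (𝓝 0) :=
    tendsto_nhdsWithin_of_tendsto_nhds
      ((continuous_const.sub continuous_id).tendsto' t 0 (sub_self t))
  have hIcc : Tendsto (fun x => μ.real (Icc (t - (t - x)) (t + (t - x)))) (𝓝[<] t) (𝓝 0) := by
    rw [← ENNReal.toReal_zero]
    exact (ENNReal.tendsto_toReal ENNReal.zero_ne_top).comp
      ((tendsto_measure_Icc μ t).comp hgap)
  refine tendsto_of_tendsto_of_tendsto_of_le_of_le' tendsto_const_nhds
    (by simpa using hIcc.const_add (μ.real (Ioi t))) ?_ ?_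
  all_goals filter_upwards [self_mem_nhdsWithin] with x (hx : x < t)
  · exact measureReal_mono (Ioi_subset_Ioi hx.le)
  · refine (measureReal_mono fun y (hy : x < y) => ?_).trans (measureReal_union_le _ _)
    rcases lt_or_ge t y with h | h
    exacts [Or.inl h, Or.inr ⟨by linarith, by linarith⟩]

end

theorem queue_mass_barrier_bound_general
    (lam : ℝ → ℝ) (hlpos : ∀ s, 0 ≤ lam s)
    (hlint : IntegrableOn lam (Icc (0:ℝ) 1))
    (π : Measure ℝ) [IsProbabilityMeasure π] (hπ2 : π (Icc (0:ℝ) 2) = 0)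
    (Q0m : Measure ℝ) [IsFiniteMeasure Q0m] [NullSingletonClass Q0m]
    (K R : ℝ → ℝ)
    (hKm : MonotoneOn K (Ici 0)) (hRm : MonotoneOn R (Ici 0))
    (hK0 : K 0 = 0) (hR0 : R 0 = 0)
    (α : ℝ → ℝ → ℝ)
    (hα : ∀ t x : ℝ, α t x = (Q0m (Icc 0 x)).toReal +
        ∫ s in (0:ℝ)..t, (if s ≤ x then lam s * (π (Icc 0 (x - s))).toReal else 0))
    (QQ : ℝ → ℝ → ℝ)
    (hQQ : ∀ t x : ℝ, 0 ≤ t → QQ t x = (α t x - K t - R t) -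
        sInf ((fun s => min (α s x - K s - R s) 0) '' Icc 0 t))
    (hzero : ∀ t x : ℝ, 0 ≤ x → x < t → QQ t x = 0)
    (Qtot : ℝ → ℝ)
    (hQtot : ∀ t : ℝ, Filter.Tendsto (fun x => QQ t x) Filter.atTop (nhds (Qtot t))) :
    ∀ t ∈ Icc (0:ℝ) 1,
      Qtot t ≤ (Q0m (Ioi t)).toReal + ∫ s in (0:ℝ)..t, lam s := by
  rintro t ⟨ht0, ht1⟩
  obtain rfl : α = arrival Q0m π lam := funext₂ hα
  have hQQ' (x : ℝ) : QQ t x = skorohodReflection (fun s => arrival Q0m π lam s x - (K + R) s) t :=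
    (hQQ t x ht0).trans (by simp only [skorohodReflection, Pi.add_apply, sub_sub])
  have hint : IntervalIntegrable lam volume 0 t :=
    (hlint.mono_set (by rw [uIcc_of_le ht0]; exact Icc_subset_Icc_right ht1)).intervalIntegrable
  have hD : MonotoneOn (K + R) (Icc 0 t) := (hKm.add hRm).mono Icc_subset_Ici_self
  have bound (x' : ℝ) (hx' : x' ≤ 2) (h0 : QQ t x' = 0) :
      Qtot t ≤ Q0m.real (Ioi x') + ∫ s in (0:ℝ)..t, lam s :=
    le_of_tendsto (hQtot t) (eventually_atTop.2 ⟨x', fun x hx => (hQQ' x).trans_le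
      (skorohodReflection_arrival_le_of_eq_zero hlpos hint hπ2 hD ht0 hx' hx
        ((hQQ' x').symm.trans h0))⟩)
  rcases ht0.eq_or_lt with rfl | htpos
  · refine bound 0 (by norm_num) ?_
    rw [hQQ', skorohodReflection_zero, arrival_eq_of_le hπ2 le_rfl (by norm_num)]
    simp [hK0, hR0, measureReal_def]
  · refine ge_of_tendsto ((tendsto_measureReal_Ioi_nhdsLT Q0m t).add_const _) ?_
    filter_upwards [Ioo_mem_nhdsLT htpos] with x' hx'
    exact bound x' (by linarith [hx'.2]) (hzero t x' hx'.1.le hx'.2)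

/-- Barrier bound for the queue mass (inequality (23) of the paper): under the
patience-gap assumption `π[0,2] = 0`, the total queue mass
`Q_t = 𝒬_t[0,∞)` satisfies `Q_t ≤ b_t = Q₀(t,∞) + E_t` for `t ∈ [0,1]`, where
`𝒬_t[0,x] = Γ₁[α_·[0,x] - K - R](t)` and `E_t = ∫₀ᵗ λ(s) ds`. -/
theorem queue_mass_barrier_bound
    (lam : ℝ → ℝ) (hlmeas : Measurable lam) (hlpos : ∀ s, 0 ≤ lam s)
    (hlint : IntegrableOn lam (Icc (0:ℝ) 1))
    (π : Measure ℝ) [IsProbabilityMeasure π] (hπ2 : π (Icc (0:ℝ) 2) = 0)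
    (Q0m : Measure ℝ) [IsFiniteMeasure Q0m] [NullSingletonClass Q0m]
    (K R : ℝ → ℝ) (hKc : Continuous K) (hRc : Continuous R)
    (hKm : MonotoneOn K (Ici 0)) (hRm : MonotoneOn R (Ici 0))
    (hK0 : K 0 = 0) (hR0 : R 0 = 0)
    (α : ℝ → ℝ → ℝ)
    (hα : ∀ t x : ℝ, α t x = (Q0m (Icc 0 x)).toReal +
        ∫ s in (0:ℝ)..t, (if s ≤ x then lam s * (π (Icc 0 (x - s))).toReal else 0))
    (QQ : ℝ → ℝ → ℝ)
    (hQQ : ∀ t x : ℝ, 0 ≤ t → QQ t x = (α t x - K t - R t) -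
        sInf ((fun s => min (α s x - K s - R s) 0) '' Icc 0 t))
    (hzero : ∀ t x : ℝ, 0 ≤ x → x < t → QQ t x = 0)
    (Qtot : ℝ → ℝ)
    (hQtot : ∀ t : ℝ, Filter.Tendsto (fun x => QQ t x) Filter.atTop (nhds (Qtot t))) :
    ∀ t ∈ Icc (0:ℝ) 1,
      Qtot t ≤ (Q0m (Ioi t)).toReal + ∫ s in (0:ℝ)..t, lam s :=
  queue_mass_barrier_bound_general lam hlpos hlint π hπ2 Q0m K R hKm hRm hK0 hR0 α hα QQ hQQ hzero
    Qtot hQtot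
end
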